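/- arXiv:2106.11877 — 2 statements merged into one kernel-verified Lean document; each statement's English description precedes it below -/
import Mathlib

section
/- Let n ∈ ℕ with n ≥ 1, let δ > 0, and let m ∈ ℕ satisfy 2^m ≥ n/δ. Let F be a finite field with 2^m elements and let A : F × F → {0,1}^n be the inner-product powering construction. Then the multiset 𝒜 := {{ A(α,β) : (α,β) ∈ F × F }} (each pair (α,β) contributing one element) is a δ-biased space over {0,1}^n; that is, for every nonempty subset S ⊆ {1,…,n}, | E_{(α,β)∼F×F}[ ⊕_{i∈S} A(α,β)_i ] − 1/2 | ≤ δ/2, where the expectation of the XOR (viewed as a number in {0,1}) is over a uniformly random pair (α,β). -/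
open Matrix Kronecker
open scoped ComplexOrder

/-- Bit strings of length `n`. -/
abbrev BS (n : ℕ) : Type := Fin n → Bool

/-- The multiset `{{a_y : y ∈ I}}` is a `δ`-biased space over `{0,1}^n`: for every nonempty
`S ⊆ [n]`, the expectation of `⊕_{i∈S} (a_y)_i` over uniform `y` is `δ/2`-close to `1/2`. -/
def IsDeltaBiased {I : Type*} [Fintype I] {n : ℕ} (a : I → BS n) (δ : ℝ) : Prop :=
  ∀ S : Finset (Fin n), S.Nonempty →
    |(Fintype.card I : ℝ)⁻¹ *
        ∑ y, (if (∑ i ∈ S, (if a y i then (1 : ZMod 2) else 0)) = 1 then (1 : ℝ) else 0)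
      - 1 / 2| ≤ δ / 2

/-- `⟨x,y⟩₂ = Σᵢ e(x)ᵢ · e(y)ᵢ ∈ 𝔽₂`, the inner product with respect to the coordinate
isomorphism `e`. -/
def innerF2 {F : Type*} [AddCommGroup F] [Module (ZMod 2) F] {m : ℕ}
    (e : F ≃ₗ[ZMod 2] (Fin m → ZMod 2)) (x y : F) : ZMod 2 :=
  ∑ i, e x i * e y i

/-- Inner-product powering construction `A(α,β) = (⟨1,β⟩₂, ⟨α,β⟩₂, …, ⟨α^{n−1},β⟩₂)`. -/
def ipConstruction {F : Type*} [Field F] [Module (ZMod 2) F] {m : ℕ}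
    (e : F ≃ₗ[ZMod 2] (Fin m → ZMod 2)) (n : ℕ) (α β : F) : BS n :=
  fun i => decide (innerF2 e (α ^ (i : ℕ)) β = 1)

open Finset

lemma zmod2_ne_one (a : ZMod 2) : a ≠ 1 ↔ a = 0 := by revert a; decide
lemma zmod2_ne_zero {a : ZMod 2} (h : a ≠ 0) : a = 1 := by revert a; decide
lemma zmod2_ite_eq (a : ZMod 2) : (if a = 1 then (1 : ZMod 2) else 0) = a := by
  revert a; decide

lemma innerF2_add_right {F : Type*} [AddCommGroup F] [Module (ZMod 2) F] {m : ℕ}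
    (e : F ≃ₗ[ZMod 2] (Fin m → ZMod 2)) (x y z : F) :
    innerF2 e x (y + z) = innerF2 e x y + innerF2 e x z := by
  simp [innerF2, map_add, mul_add, Finset.sum_add_distrib]

lemma innerF2_sum_left {F : Type*} [AddCommGroup F] [Module (ZMod 2) F] {m : ℕ}
    (e : F ≃ₗ[ZMod 2] (Fin m → ZMod 2)) {ι : Type*} (s : Finset ι) (g : ι → F) (y : F) :
    innerF2 e (∑ i ∈ s, g i) y = ∑ i ∈ s, innerF2 e (g i) y := by
  simp only [innerF2, map_sum, Finset.sum_apply, Finset.sum_mul]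
  exact Finset.sum_comm

lemma innerF2_zero_left {F : Type*} [AddCommGroup F] [Module (ZMod 2) F] {m : ℕ}
    (e : F ≃ₗ[ZMod 2] (Fin m → ZMod 2)) (y : F) : innerF2 e 0 y = 0 := by
  simp [innerF2]

lemma two_mul_count_inner_one {F : Type*} [AddCommGroup F] [Fintype F] [Module (ZMod 2) F]
    {m : ℕ} (e : F ≃ₗ[ZMod 2] (Fin m → ZMod 2)) (x : F) (hx : x ≠ 0) :
    2 * (Finset.univ.filter (fun β => innerF2 e x β = 1)).card = Fintype.card F := by
  have hex : e x ≠ 0 := by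
    intro h; exact hx (by simpa using congrArg e.symm h)
  obtain ⟨j, hj⟩ : ∃ j, e x j ≠ 0 := by
    by_contra h; push_neg at h; exact hex (funext h)
  set β₀ : F := e.symm (Pi.single j 1) with hβ₀
  have hfβ₀ : innerF2 e x β₀ = 1 := by
    have : innerF2 e x β₀ = e x j := by
      simp [innerF2, hβ₀, Pi.single_apply, mul_ite, Finset.sum_ite_eq']
    rw [this]; exact zmod2_ne_zero hj
  have hinv : β₀ + β₀ = 0 := by
    have h2 : (2 : ZMod 2) = 0 := by decide
    rw [← two_smul (ZMod 2) β₀, h2, zero_smul]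
  have hcard : (Finset.univ.filter (fun β => innerF2 e x β = 1)).card
      = (Finset.univ.filter (fun β => innerF2 e x β = 0)).card := by
    apply Finset.card_bij' (fun β _ => β + β₀) (fun β _ => β + β₀)
    · intro β hβ
      simp only [Finset.mem_filter, Finset.mem_univ, true_and] at hβ ⊢
      rw [innerF2_add_right, hβ, hfβ₀]; decide
    · intro β hβ
      simp only [Finset.mem_filter, Finset.mem_univ, true_and] at hβ ⊢
      rw [innerF2_add_right, hβ, hfβ₀]; decide
    · intro β _; rw [add_assoc, hinv, add_zero]
    · intro β _; rw [add_assoc, hinv, add_zero]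
  have hsplit := Finset.card_filter_add_card_filter_not
    (s := (Finset.univ : Finset F)) (p := fun β => innerF2 e x β = 1)
  have : (Finset.univ.filter (fun β => ¬ innerF2 e x β = 1)).card
      = (Finset.univ.filter (fun β => innerF2 e x β = 0)).card := by
    congr 1; apply Finset.filter_congr; intro β _; exact zmod2_ne_one _
  rw [this, ← hcard] at hsplit
  simpa [two_mul, Finset.card_univ] using hsplit

/-- If `n ≥ 1`, `δ > 0` and `2^m ≥ n/δ`, then the multiset
`{{A(α,β) : (α,β) ∈ F × F}}` given by the inner-product powering construction over a finite
field `F` with `2^m` elements is a `δ`-biased space over `{0,1}^n`. -/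
theorem ipConstruction_is_delta_biased
    (n : ℕ) (hn : 1 ≤ n) (δ : ℝ) (hδ : 0 < δ) (m : ℕ)
    (hm : (n : ℝ) / δ ≤ (2 : ℝ) ^ m)
    (F : Type*) [Field F] [Fintype F] [Module (ZMod 2) F]
    (hF : Fintype.card F = 2 ^ m)
    (e : F ≃ₗ[ZMod 2] (Fin m → ZMod 2)) :
    IsDeltaBiased (fun p : F × F => ipConstruction e n p.1 p.2) δ := by
  intro S hS
  classical
  set q : ℝ := (2 : ℝ) ^ m with hq
  have hq0 : (0 : ℝ) < q := by positivity
  have hcardF : (Fintype.card F : ℝ) = q := by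
    rw [hF]; push_cast; ring
  -- the polynomial p(X) = ∑_{i∈S} X^i
  set P : Polynomial F := ∑ i ∈ S, Polynomial.X ^ (i : ℕ) with hP
  obtain ⟨i₀, hi₀⟩ := hS
  have hPne : P ≠ 0 := by
    intro h
    have hc : P.coeff (i₀ : ℕ) = 1 := by
      rw [hP, Polynomial.finset_sum_coeff]
      rw [Finset.sum_eq_single i₀]
      · simp
      · intro i hi hne
        rw [Polynomial.coeff_X_pow, if_neg]
        exact fun hcast => hne (Fin.ext hcast.symm)
      · intro h'; exact absurd hi₀ h'
    rw [h] at hc; simp at hc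
  have hPdeg : P.natDegree ≤ n - 1 := by
    apply Polynomial.natDegree_sum_le_of_forall_le
    intro i _
    rw [Polynomial.natDegree_X_pow]
    omega
  -- roots
  set Rt : Finset F := Finset.univ.filter (fun α => P.eval α = 0) with hRt
  have hRtcard : Rt.card ≤ n - 1 := by
    have hsub : Rt ⊆ P.roots.toFinset := by
      intro α hα
      rw [hRt, Finset.mem_filter] at hα
      rw [Multiset.mem_toFinset, Polynomial.mem_roots hPne]
      exact hα.2
    calc Rt.card ≤ P.roots.toFinset.card := Finset.card_le_card hsub
      _ ≤ Multiset.card P.roots := P.roots.toFinset_card_le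
      _ ≤ P.natDegree := P.card_roots'
      _ ≤ n - 1 := hPdeg
  -- rewrite the summand
  have key : ∀ α β : F,
      (∑ i ∈ S, (if ipConstruction e n α β i then (1 : ZMod 2) else 0))
        = innerF2 e (P.eval α) β := by
    intro α β
    have : ∀ i : Fin n, (if ipConstruction e n α β i then (1 : ZMod 2) else 0)
        = innerF2 e (α ^ (i : ℕ)) β := by
      intro i
      simp only [ipConstruction, decide_eq_true_eq]
      exact zmod2_ite_eq _
    rw [Finset.sum_congr rfl (fun i _ => this i)]
    rw [hP, Polynomial.eval_finset_sum]
    simp only [Polynomial.eval_pow, Polynomial.eval_X]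
    exact (innerF2_sum_left e S _ β).symm
  -- compute the sum
  have hsum : (∑ y : F × F, (if (∑ i ∈ S,
        (if (fun p : F × F => ipConstruction e n p.1 p.2) y i then (1 : ZMod 2) else 0)) = 1
        then (1 : ℝ) else 0))
      = ((Fintype.card F : ℝ) - Rt.card) * (q / 2) := by
    rw [Fintype.sum_prod_type]
    have hin : ∀ α : F, (∑ β : F, (if (∑ i ∈ S,
          (if ipConstruction e n α β i then (1 : ZMod 2) else 0)) = 1
          then (1 : ℝ) else 0))
        = if P.eval α = 0 then 0 else q / 2 := by
      intro α
      have : ∀ β : F, (if (∑ i ∈ S,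
          (if ipConstruction e n α β i then (1 : ZMod 2) else 0)) = 1
          then (1 : ℝ) else 0) = if innerF2 e (P.eval α) β = 1 then (1:ℝ) else 0 := by
        intro β; rw [key α β]
      rw [Finset.sum_congr rfl (fun β _ => this β)]
      rw [Finset.sum_boole]
      by_cases h0 : P.eval α = 0
      · rw [if_pos h0]
        have : (Finset.univ.filter (fun β => innerF2 e (P.eval α) β = 1)) = ∅ := by
          apply Finset.filter_false_of_mem
          intro β _
          rw [h0, innerF2_zero_left]
          decide
        rw [this]; simp
      · rw [if_neg h0]
        have h2 := two_mul_count_inner_one e (P.eval α) h0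
        have : ((Finset.univ.filter (fun β => innerF2 e (P.eval α) β = 1)).card : ℝ)
            = q / 2 := by
          have := congrArg (fun k : ℕ => (k : ℝ)) h2
          push_cast at this
          rw [hcardF] at this
          linarith
        rw [← this]
    rw [Finset.sum_congr rfl (fun α _ => hin α)]
    rw [Finset.sum_ite, Finset.sum_const, Finset.sum_const]
    have hc1 : (Finset.univ.filter (fun α => P.eval α = 0)) = Rt := rfl
    have hc2 : (Finset.univ.filter (fun α => ¬ P.eval α = 0)).card
        = Fintype.card F - Rt.card := by
      rw [Finset.filter_not, Finset.card_univ_diff, hRt]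
    rw [hc1, hc2]
    have hle : Rt.card ≤ Fintype.card F := by
      rw [hRt]; exact Finset.card_filter_le _ _
    rw [smul_zero, zero_add, nsmul_eq_mul, Nat.cast_sub hle]
  -- final arithmetic
  have hcardI : (Fintype.card (F × F) : ℝ) = q ^ 2 := by
    rw [Fintype.card_prod]
    push_cast
    rw [hcardF]; ring
  rw [hcardI, hsum, hcardF]
  have hR0 : (0 : ℝ) ≤ (Rt.card : ℝ) := Nat.cast_nonneg _
  have hRn : (Rt.card : ℝ) ≤ (n : ℝ) := by
    have : Rt.card ≤ n := le_trans hRtcard (Nat.sub_le n 1)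
    exact_mod_cast this
  have heq : (q ^ 2)⁻¹ * ((q - Rt.card) * (q / 2)) - 1 / 2
      = -(Rt.card / (2 * q)) := by
    field_simp
    ring
  rw [heq, abs_neg, abs_of_nonneg (by positivity)]
  -- Rt.card / (2q) ≤ δ/2  ⟸  n ≤ δ q
  have hnq : (n : ℝ) ≤ δ * q := by
    rw [div_le_iff₀ hδ] at hm
    linarith [hm]
  rw [div_le_iff₀ (by positivity : (0:ℝ) < 2 * q)]
  calc (Rt.card : ℝ) ≤ (n : ℝ) := hRn
    _ ≤ δ * q := hnq
    _ ≤ δ / 2 * (2 * q) := le_of_eq (by ring)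
end

section
/- Let S, T ∈ ℕ. For each i ∈ {1,…,T}, let C_i : ℂ^{2^S×2^S} → ℂ^{2^S×2^S} be an arbitrary linear map, and let q_i ∈ {1,…,S} be a qubit index. For a qubit index q, let M_q denote the measurement operator on qubit q (the linear map that zeroes out all matrix entries whose row and column basis strings differ in coordinate q), and for b ∈ {0,1} let V_{q,b} be the linear map with V_{q,0}(ρ) := ρ and V_{q,1}(ρ) := R_q ρ R_qᴴ, where R_q is the reflection 2|1⟩⟨1| − I₂ applied to qubit q (tensored with the identity on the remaining qubits). Then for every matrix ρ ∈ ℂ^{2^S×2^S}: (C_T ∘ M_{q_T} ∘ C_{T−1} ∘ M_{q_{T−1}} ∘ ⋯ ∘ C_1 ∘ M_{q_1})(ρ) = 2^{−T} · Σ_{r∈{0,1}^T} (C_T ∘ V_{q_T,r_T} ∘ ⋯ ∘ C_1 ∘ V_{q_1,r_1})(ρ). (In words: a computation with T intermediate measurements equals the average, over T uniformly random bits, of the computation in which each measurement is replaced by a randomly applied reflection.) -/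
open Matrix Kronecker
open scoped ComplexOrder

/-- The measurement operator on qubit `q`: zeroes out all entries whose row and column
basis strings differ in coordinate `q`. -/
def measOp (S : ℕ) (q : Fin S) (ρ : Matrix (BS S) (BS S) ℂ) : Matrix (BS S) (BS S) ℂ :=
  Matrix.of fun x y => if x q = y q then ρ x y else 0

/-- The reflection `2|1⟩⟨1| − I₂` applied to qubit `q` (tensored with the identity on the
remaining qubits). -/
noncomputable def reflMat (S : ℕ) (q : Fin S) : Matrix (BS S) (BS S) ℂ :=
  Matrix.diagonal fun x => if x q then 1 else -1

/-- `V_{q,0}(ρ) = ρ` and `V_{q,1}(ρ) = R_q ρ R_qᴴ`. -/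
noncomputable def reflOp (S : ℕ) (q : Fin S) (b : Bool) (ρ : Matrix (BS S) (BS S) ℂ) :
    Matrix (BS S) (BS S) ℂ :=
  if b then reflMat S q * ρ * (reflMat S q)ᴴ else ρ

/-!
The reflection on qubit `q` flips the sign of exactly the entries that the measurement on `q`
zeroes out, so each measurement is the average of the identity and the reflection. Since every
step of the computation is linear, the composition expands over all `2 ^ T` choices of branch.
-/

theorem Fin.foldl_eq_smul_sum_foldl {R M α : Type*} [CommSemiring R] [AddCommMonoid M]
    [Module R M] [Fintype α] {T : ℕ} (c : R) (E : Fin T → M →ₗ[R] M) (F : Fin T → α → M → M)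
    (hE : ∀ i x, E i x = c • ∑ a, F i a x) (x : M) :
    Fin.foldl T (fun τ i => E i τ) x =
      c ^ T • ∑ r : Fin T → α, Fin.foldl T (fun τ i => F i (r i) τ) x := by
  induction T with
  | zero => simp
  | succ n ih =>
    have ih' := ih (fun i => E i.castSucc) (fun i => F i.castSucc) (fun i => hE i.castSucc)
    rw [Fin.foldl_succ_last, ih', map_smul, map_sum,
      ← (Fin.snocEquiv fun _ => α).sum_comp, Fintype.sum_prod_type, Finset.sum_comm]
    simp only [hE, Finset.smul_sum, smul_smul, Fin.snocEquiv_apply, Fin.foldl_succ_last,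
      Fin.snoc_last, Fin.snoc_castSucc, pow_succ]

theorem reflOp_true_apply (S : ℕ) (q : Fin S) (ρ : Matrix (BS S) (BS S) ℂ) (x y : BS S) :
    reflOp S q true ρ x y = if x q = y q then ρ x y else -ρ x y := by
  simp only [reflOp, reflMat, if_true, diagonal_conjTranspose, diagonal_mul, mul_diagonal,
    Pi.star_apply]
  cases x q <;> cases y q <;> simp

theorem measOp_eq_half_sum_reflOp (S : ℕ) (q : Fin S) (ρ : Matrix (BS S) (BS S) ℂ) :
    measOp S q ρ = (2 : ℂ)⁻¹ • ∑ b, reflOp S q b ρ := by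
  ext x y
  simp only [measOp, of_apply, Fintype.sum_bool, Matrix.smul_apply, Matrix.add_apply,
    reflOp_true_apply]
  split_ifs <;> simp only [reflOp, Bool.false_eq_true, if_false] <;> ring

def measOpLinear (S : ℕ) (q : Fin S) : Matrix (BS S) (BS S) ℂ →ₗ[ℂ] Matrix (BS S) (BS S) ℂ where
  toFun := measOp S q
  map_add' ρ σ := by ext x y; simp only [measOp, of_apply, Matrix.add_apply]; split_ifs <;> simp
  map_smul' c ρ := by ext x y; simp only [measOp, of_apply, Matrix.smul_apply]; split_ifs <;> simp

/-- A computation with `T` intermediate measurements equals the average,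
over `T` uniformly random bits, of the computation in which each measurement is replaced by
a randomly applied reflection:
`(C_T ∘ M_{q_T} ∘ ⋯ ∘ C_1 ∘ M_{q_1})(ρ) = 2^{−T} Σ_{r∈{0,1}^T} (C_T ∘ V_{q_T,r_T} ∘ ⋯ ∘ C_1 ∘ V_{q_1,r_1})(ρ)`. -/
theorem measurements_eq_average_over_random_reflections
    (S T : ℕ)
    (C : Fin T → (Matrix (BS S) (BS S) ℂ →ₗ[ℂ] Matrix (BS S) (BS S) ℂ))
    (q : Fin T → Fin S) (ρ : Matrix (BS S) (BS S) ℂ) :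
    Fin.foldl T (fun τ i => C i (measOp S (q i) τ)) ρ =
      ((2 : ℂ) ^ T)⁻¹ •
        ∑ r : Fin T → Bool, Fin.foldl T (fun τ i => C i (reflOp S (q i) (r i) τ)) ρ := by
  rw [← inv_pow]
  refine Fin.foldl_eq_smul_sum_foldl _ (fun i => (C i).comp (measOpLinear S (q i)))
    (fun i b τ => C i (reflOp S (q i) b τ)) (fun i τ => ?_) ρ
  simp only [LinearMap.comp_apply, measOpLinear, LinearMap.coe_mk, AddHom.coe_mk,
    measOp_eq_half_sum_reflOp, map_smul, map_sum]
end
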